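/- For every n ∈ ℕ, the entropy of the round n-sphere exceeds √2: E(n) = 2√π·(n/(2e))^{n/2}/Γ((n+1)/2) > √2. -/

import Mathlib

/-!
Put `x = n / 2`; the claim is the Stirling-type bound `Γ(x + 1/2) < √(2π) (x / e) ^ x`.
Write `s k = k! / (√(2k) (k / e) ^ k)` for the Stirling sequence, which decreases strictly to `√π`.

For `n = 2m`, Legendre's duplication formula gives `Γ(m + 1/2) m! = (2m)! √π / 4 ^ m`, and the
bound becomes `s (2m) < s m`. For `n = 2m + 1` it reads `m! < √(2π) ((m + 1/2) / e) ^ (m + 1/2)`;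
Robbins' estimate `log (s m) ≤ log √π + 1 / (12m)` reduces it to
`1 / (12m) < (m + 1/2) log (1 + 1 / (2m)) - 1/2`, and already the first term `2 / (4m + 1)` of the
series of `log (1 + 1 / (2m))` is enough. The cases `n = 0` and `n = 1` come down to `√2 < 2` and
`e < π`.
-/

/-- Stone's formula for the entropy of the round `n`-sphere (with `0 ^ 0 = 1`). -/
noncomputable def sphereEntropy (n : ℕ) : ℝ :=
  2 * Real.sqrt Real.pi * ((n : ℝ) / (2 * Real.exp 1)) ^ ((n : ℝ) / 2) /
    Real.Gamma (((n : ℝ) + 1) / 2)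

open Real Stirling Filter Topology
open scoped Nat

theorem stirlingSeq_pos {n : ℕ} (hn : n ≠ 0) : 0 < stirlingSeq n :=
  (sqrt_pos.mpr pi_pos).trans_le (sqrt_pi_le_stirlingSeq hn)

theorem stirlingSeq_succ_strictAnti : StrictAnti (stirlingSeq ∘ Nat.succ) := by
  refine strictAnti_nat_of_succ_lt fun n => ?_
  have hpos : 0 < log (stirlingSeq (n + 1)) - log (stirlingSeq (n + 2)) :=
    lt_of_lt_of_le (by positivity)
      (le_hasSum (log_stirlingSeq_sdiff_hasSum n) 0 fun _ _ => by positivity)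
  exact (log_lt_log_iff (stirlingSeq'_pos _) (stirlingSeq'_pos _)).mp (by linarith)

theorem log_stirlingSeq_le_log_sqrt_pi_add {n : ℕ} (hn : n ≠ 0) :
    log (stirlingSeq n) ≤ log √π + 1 / (12 * n) := by
  obtain ⟨n, rfl⟩ := Nat.exists_eq_succ_of_ne_zero hn
  -- Robbins' bound makes `log (stirlingSeq k) - 1 / (12 k)` increase to `log √π`.
  set f : ℕ → ℝ := fun k => log (stirlingSeq (k + 1)) - 1 / (12 * (k + 1 : ℕ))
  have hmono : Monotone f := monotone_nat_of_le_succ fun k => by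
    have hrobbins := log_stirlingSeq_sdiff_le (k + 1)
    have htelescope : (1 : ℝ) / (12 * (k + 1 : ℕ) * ((k + 1 : ℕ) + 1)) =
        1 / (12 * (k + 1 : ℕ)) - 1 / (12 * (k + 1 + 1 : ℕ)) := by
      push_cast; field_simp; ring
    simp only [f]
    linarith
  have hlim : Tendsto f atTop (𝓝 (log √π - 0)) := by
    refine ((tendsto_stirlingSeq_sqrt_pi.comp (tendsto_add_atTop_nat 1)).log
      (by positivity)).sub (tendsto_const_nhds.div_atTop ?_)
    exact (tendsto_natCast_atTop_atTop.comp (tendsto_add_atTop_nat 1)).const_mul_atTop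
      (by norm_num)
  have hle := hmono.ge_of_tendsto hlim n
  simp only [f, sub_zero] at hle
  linarith

theorem two_div_two_mul_add_one_le_log_one_add_inv {a : ℝ} (ha : 0 < a) :
    2 / (2 * a + 1) ≤ log (1 + a⁻¹) := by
  simpa [div_eq_mul_inv] using
    le_hasSum (hasSum_log_one_add_inv ha) 0 fun _ _ => by positivity

theorem one_div_twelve_mul_lt_mul_log_one_add_inv_sub_half {x : ℝ} (hx : 1 / 2 < x) :
    1 / (12 * x) < (x + 1 / 2) * log (1 + (2 * x)⁻¹) - 1 / 2 := by
  have hlog := two_div_two_mul_add_one_le_log_one_add_inv (by linarith : 0 < 2 * x)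
  calc 1 / (12 * x) < (x + 1 / 2) * (2 / (2 * (2 * x) + 1)) - 1 / 2 := by
        rw [div_lt_iff₀ (by linarith)]
        field_simp
        nlinarith
    _ ≤ (x + 1 / 2) * log (1 + (2 * x)⁻¹) - 1 / 2 := by
        have : 0 ≤ x + 1 / 2 := by linarith
        gcongr

theorem Gamma_nat_add_half_mul_factorial (m : ℕ) :
    Gamma (m + 1 / 2) * m ! = (2 * m)! * √π / 4 ^ m := by
  have h := Gamma_mul_Gamma_add_half (m + 1 / 2)
  rw [show (m : ℝ) + 1 / 2 + 1 / 2 = m + 1 by ring,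
    show 2 * ((m : ℝ) + 1 / 2) = (2 * m : ℕ) + 1 by push_cast; ring,
    Gamma_nat_eq_factorial, Gamma_nat_eq_factorial] at h
  rw [h, show 1 - (((2 * m : ℕ) : ℝ) + 1) = -(2 * m : ℕ) by ring, rpow_neg (by norm_num),
    rpow_natCast, pow_mul]
  norm_num
  ring

theorem sphereEntropy_zero : sphereEntropy 0 = 2 := by
  rw [sphereEntropy, Nat.cast_zero, zero_div, zero_div, rpow_zero, zero_add, Gamma_one_half_eq]
  field_simp

theorem sqrt_two_lt_sphereEntropy_iff {n : ℕ} (hn : n ≠ 0) :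
    √2 < sphereEntropy n ↔
      log (Gamma ((n + 1) / 2)) < log (2 * π) / 2 + n / 2 * (log (n / 2) - 1) := by
  have hG : 0 < Gamma ((n + 1) / 2) := Gamma_pos_of_pos (by positivity)
  have hA : 0 < 2 * √π * ((n : ℝ) / (2 * exp 1)) ^ ((n : ℝ) / 2) := by positivity
  have hlogA : log (2 * √π * ((n : ℝ) / (2 * exp 1)) ^ ((n : ℝ) / 2)) =
      log 2 + log π / 2 + n / 2 * (log (n / 2) - 1) := by
    rw [log_mul (by positivity) (by positivity), log_mul (by positivity) (by positivity),
      log_sqrt pi_nonneg, log_rpow (by positivity), ← div_div,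
      log_div (by positivity) (exp_ne_zero 1), log_exp]
  rw [sphereEntropy, lt_div_iff₀ hG, ← log_lt_log_iff (by positivity) hA,
    log_mul (by positivity) hG.ne', hlogA, log_sqrt zero_le_two, log_mul two_ne_zero pi_ne_zero]
  constructor <;> intro <;> linarith

theorem sqrt_two_lt_sphereEntropy_one : √2 < sphereEntropy 1 := by
  rw [sqrt_two_lt_sphereEntropy_iff one_ne_zero]
  have hlog_pi : 1 < log π := by
    rw [lt_log_iff_exp_lt pi_pos]
    exact exp_one_lt_three.trans pi_gt_three
  norm_num [log_mul, log_div, pi_ne_zero]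
  linarith

theorem sqrt_two_lt_sphereEntropy_two_mul {m : ℕ} (hm : m ≠ 0) :
    √2 < sphereEntropy (2 * m) := by
  have hstirl : log (stirlingSeq (2 * m)) < log (stirlingSeq m) := by
    refine log_lt_log (stirlingSeq_pos (by omega)) ?_
    obtain ⟨k, rfl⟩ := Nat.exists_eq_succ_of_ne_zero hm
    have := stirlingSeq_succ_strictAnti (show k < 2 * k + 1 by omega)
    rwa [show 2 * (k + 1) = 2 * k + 1 + 1 by ring]
  have hGamma := congrArg log (Gamma_nat_add_half_mul_factorial m)
  have hformula_two_mul := log_stirlingSeq_formula (2 * m)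
  have hformula := log_stirlingSeq_formula m
  have : (0 : ℝ) < m := by positivity
  have : 0 < Gamma (m + 1 / 2) := Gamma_pos_of_pos (by positivity)
  simp (disch := positivity) only [log_mul, log_div, log_pow, log_exp, log_sqrt, Nat.cast_mul,
    Nat.cast_ofNat] at hGamma hformula_two_mul hformula
  have hlog_four : log 4 = 2 * log 2 := by
    rw [show (4 : ℝ) = 2 ^ 2 by norm_num, log_pow, Nat.cast_ofNat]
  rw [hlog_four] at hGamma
  rw [sqrt_two_lt_sphereEntropy_iff (by omega)]
  push_cast
  rw [show (2 * (m : ℝ) + 1) / 2 = m + 1 / 2 by ring, show 2 * (m : ℝ) / 2 = m by ring,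
    log_mul two_ne_zero pi_ne_zero]
  linarith

theorem sqrt_two_lt_sphereEntropy_two_mul_add_one {m : ℕ} (hm : m ≠ 0) :
    √2 < sphereEntropy (2 * m + 1) := by
  have hm_ge : (1 : ℝ) ≤ m := by exact_mod_cast Nat.one_le_iff_ne_zero.mpr hm
  have hstirl := log_stirlingSeq_le_log_sqrt_pi_add hm
  have hformula := log_stirlingSeq_formula m
  have hgap := one_div_twelve_mul_lt_mul_log_one_add_inv_sub_half (x := m) (by linarith)
  have hlog_one_add : log (1 + (2 * m : ℝ)⁻¹) = log (m + 1 / 2) - log m := by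
    rw [← log_div (by positivity) (by positivity)]
    congr 1
    field_simp
  rw [hlog_one_add] at hgap
  simp (disch := positivity) only [log_mul, log_div, log_exp, log_sqrt] at hstirl hformula
  rw [sqrt_two_lt_sphereEntropy_iff (by omega)]
  push_cast
  rw [show (2 * (m : ℝ) + 1 + 1) / 2 = m + 1 by ring,
    show (2 * (m : ℝ) + 1) / 2 = m + 1 / 2 by ring,
    Gamma_nat_eq_factorial, log_mul two_ne_zero pi_ne_zero]
  linarith

theorem sphereEntropy_gt_sqrt_two : ∀ n : ℕ, Real.sqrt 2 < sphereEntropy n := by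
  intro n
  obtain ⟨m, rfl | rfl⟩ := Nat.even_or_odd' n
  · rcases eq_or_ne m 0 with rfl | hm
    · rw [sphereEntropy_zero, sqrt_lt' two_pos]
      norm_num
    · exact sqrt_two_lt_sphereEntropy_two_mul hm
  · rcases eq_or_ne m 0 with rfl | hm
    · exact sqrt_two_lt_sphereEntropy_one
    · exact sqrt_two_lt_sphereEntropy_two_mul_add_one hm
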